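/- For every x₀ ∈ ℝ² with x₀ ≠ 0 the function k ↦ sin²(⟨k, x₀⟩/2)/(1+|k|²) is not integrable on ℝ², i.e. ∫_{ℝ²} sin²(⟨k, x₀⟩/2)/(1+|k|²) dk = ∞ (the Lebesgue integral of this non-negative function diverges). -/

import Mathlib

/-!
Choose `v` with `⟪v, x₀⟫ = π`. Translating by `v` turns `sin²(⟪k, x₀⟫/2)` into `cos²(⟪k, x₀⟫/2)`,
so the integrand `f` satisfies `f k + f (v + k) ≥ 1 / (1 + (‖k‖ + ‖v‖)²)`. By translation
invariance, integrability of `f` would make this radial function integrable on `ℝ²`; in polar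
coordinates that means `y / (1 + (y + ‖v‖)²)` is integrable on `(0, ∞)`, which it is not, since
it is bounded below by a multiple of `1 / y` at infinity.
-/

open MeasureTheory Set

theorem not_integrableOn_Ioi_pow_div_one_add_add_sq {n : ℕ} (hn : 1 ≤ n) (c : ℝ) :
    ¬ IntegrableOn (fun y : ℝ => y ^ n / (1 + (y + c) ^ 2)) (Ioi 0) := by
  intro h
  set C := 1 + (1 + |c|) ^ 2
  have hC : IntegrableOn (fun y : ℝ => C * (y ^ n / (1 + (y + c) ^ 2))) (Ioi 1) :=
    (h.mono_set (Ioi_subset_Ioi zero_le_one)).const_mul C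
  refine not_integrableOn_Ioi_inv (hC.mono' (by fun_prop) ?_)
  refine (ae_restrict_iff' measurableSet_Ioi).2 (.of_forall fun y (hy : 1 < y) => ?_)
  have hy₀ : 0 < y := one_pos.trans hy
  have hyn : y ≤ y ^ n := le_self_pow₀ hy.le (by omega)
  have habs : |y + c| ≤ y * (1 + |c|) := (abs_add_le y c).trans (by
    rw [abs_of_pos hy₀]; nlinarith [abs_nonneg c])
  have hsq : (y + c) ^ 2 ≤ (y * (1 + |c|)) ^ 2 := sq_abs (y + c) ▸ by gcongr
  have hCy : 0 ≤ C * y := by positivity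
  rw [Real.norm_of_nonneg (inv_nonneg.2 hy₀.le), inv_eq_one_div, div_le_iff₀ hy₀, mul_div_assoc',
    div_mul_eq_mul_div, le_div_iff₀ (by positivity)]
  nlinarith [mul_le_mul_of_nonneg_left hyn hCy]

theorem not_integrable_one_div_one_add_norm_add_sq {E : Type*} [NormedAddCommGroup E]
    [NormedSpace ℝ E] [FiniteDimensional ℝ E] [MeasurableSpace E] [BorelSpace E]
    (μ : Measure E) [μ.IsAddHaarMeasure] (hE : 2 ≤ Module.finrank ℝ E) (c : ℝ) :
    ¬ Integrable (fun x : E => 1 / (1 + (‖x‖ + c) ^ 2)) μ := by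
  have : Nontrivial E := Module.nontrivial_of_finrank_pos (R := ℝ) (by omega)
  rw [integrable_fun_norm_addHaar μ (f := fun y => 1 / (1 + (y + c) ^ 2))]
  simpa only [smul_eq_mul, mul_one_div] using
    not_integrableOn_Ioi_pow_div_one_add_add_sq (n := Module.finrank ℝ E - 1) (by omega) c

theorem one_div_le_sin_sq_div_add_cos_sq_div {a b d : ℝ} (ha : 0 < a) (hb : 0 < b)
    (had : a ≤ d) (hbd : b ≤ d) (θ : ℝ) :
    1 / d ≤ Real.sin θ ^ 2 / a + Real.cos θ ^ 2 / b := calc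
  1 / d = Real.sin θ ^ 2 / d + Real.cos θ ^ 2 / d := by rw [← add_div, Real.sin_sq_add_cos_sq]
  _ ≤ Real.sin θ ^ 2 / a + Real.cos θ ^ 2 / b := by gcongr

theorem one_div_le_sin_sq_inner_div_add_translate {F : Type*} [NormedAddCommGroup F]
    [InnerProductSpace ℝ F] {x₀ v : F} (hv : inner ℝ v x₀ = Real.pi) (k : F) :
    1 / (1 + (‖k‖ + ‖v‖) ^ 2) ≤
      Real.sin (inner ℝ k x₀ / 2) ^ 2 / (1 + ‖k‖ ^ 2) +
        Real.sin (inner ℝ (v + k) x₀ / 2) ^ 2 / (1 + ‖v + k‖ ^ 2) := by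
  have hcos : Real.sin (inner ℝ (v + k) x₀ / 2) = Real.cos (inner ℝ k x₀ / 2) := by
    rw [inner_add_left, hv, add_div, add_comm, Real.sin_add_pi_div_two]
  rw [hcos]
  refine one_div_le_sin_sq_div_add_cos_sq_div (by positivity) (by positivity) ?_ ?_ _
  · gcongr
    exact le_add_of_nonneg_right (norm_nonneg v)
  · gcongr
    exact (norm_add_le v k).trans_eq (add_comm _ _)

theorem stmt_15 (x₀ : EuclideanSpace ℝ (Fin 2)) (hx₀ : x₀ ≠ 0) :
    ¬ Integrable (fun k : EuclideanSpace ℝ (Fin 2) =>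
        Real.sin ((inner ℝ k x₀ : ℝ) / 2) ^ 2 / (1 + ‖k‖ ^ 2)) volume ∧
    ∫⁻ k : EuclideanSpace ℝ (Fin 2),
      ENNReal.ofReal (Real.sin ((inner ℝ k x₀ : ℝ) / 2) ^ 2 / (1 + ‖k‖ ^ 2)) ∂volume = ⊤ := by
  set f := fun k : EuclideanSpace ℝ (Fin 2) =>
    Real.sin ((inner ℝ k x₀ : ℝ) / 2) ^ 2 / (1 + ‖k‖ ^ 2)
  set v := (Real.pi / ‖x₀‖ ^ 2) • x₀
  have hv : inner ℝ v x₀ = Real.pi := by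
    rw [real_inner_smul_left, real_inner_self_eq_norm_sq,
      div_mul_cancel₀ _ (pow_ne_zero 2 (norm_ne_zero_iff.2 hx₀))]
  have hbound : ∀ k, ‖1 / (1 + (‖k‖ + ‖v‖) ^ 2)‖ ≤ f k + f (v + k) := fun k => by
    rw [Real.norm_of_nonneg (by positivity)]
    exact one_div_le_sin_sq_inner_div_add_translate hv k
  have hf : ¬ Integrable f volume := fun hf =>
    not_integrable_one_div_one_add_norm_add_sq volume (by simp) ‖v‖ <|
      (hf.add (hf.comp_add_left v)).mono' (Measurable.aestronglyMeasurable (by fun_prop))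
        (.of_forall hbound)
  refine ⟨hf, not_ne_iff.1 fun h => hf ?_⟩
  exact (lintegral_ofReal_ne_top_iff_integrable (by fun_prop)
    (.of_forall fun k => by positivity)).1 h
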